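/- Let λ > 0, t ∈ ℝⁿ, and let u* ∈ B_k minimize u ↦ Σ_{j=1}^m φ(√d_j·t_{s_j}, λd_j + u_j) over B_k = {u : 0 ≤ u ≤ 1, Σ_j u_j ≤ k}. Then the proximal point v = prox_{λ·GS_k}(t) is given groupwise by v_{s_j} = (u*_j / (λ d_j + u*_j)) · t_{s_j} for each j ∈ {1,…,m}. -/

import Mathlib

open Finset

noncomputable section
open scoped Classical BigOperators

/-- Keep only the entries of `θ` in the index set `s`, zero out the rest. -/
def groupProj {n : ℕ} (s : Finset (Fin n)) (θ : Fin n → ℝ) : Fin n → ℝ :=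
  fun i => if i ∈ s then θ i else 0

/-- Number of groups of `θ` (w.r.t. the groups `s`) that are nonzero. -/
def nnzGroups {n m : ℕ} (s : Fin m → Finset (Fin n)) (θ : Fin n → ℝ) : ℕ :=
  (Finset.univ.filter fun j => groupProj (s j) θ ≠ 0).card

/-- The indicator-augmented weighted group sparse function `gs_k`. -/
def gsk {n m : ℕ} (s : Fin m → Finset (Fin n)) (d : Fin m → ℝ) (k : ℕ)
    (θ : Fin n → ℝ) : EReal :=
  if nnzGroups s θ ≤ k then
    (((1 : ℝ) / 2) * ∑ j, d j * ∑ i ∈ s j, (θ i) ^ 2 : ℝ) else ⊤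

/-- Fenchel conjugate of an extended-real-valued function on `ℝⁿ`. -/
def fconj {n : ℕ} (f : (Fin n → ℝ) → EReal) (y : Fin n → ℝ) : EReal :=
  ⨆ θ : Fin n → ℝ, ((∑ i, y i * θ i : ℝ) : EReal) - f θ

/-- Perspective of the squared Euclidean norm. -/
def phi {n : ℕ} (v : Fin n → ℝ) (t : ℝ) : EReal :=
  if 0 < t then ((∑ i, (v i) ^ 2) / t : ℝ)
  else if v = 0 ∧ t = 0 then (0 : EReal) else ⊤

/-- `ℓ₀` "norm": number of nonzero coordinates. -/
def l0norm {n : ℕ} (t : Fin n → ℝ) : ℕ :=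
  (Finset.univ.filter fun i => t i ≠ 0).card

/-- The (unstructured) sparse function `s_k`. -/
def sparseFun {m : ℕ} (k : ℕ) (x : Fin m → ℝ) : EReal :=
  if l0norm x ≤ k then (((1 : ℝ) / 2) * ∑ i, (x i) ^ 2 : ℝ) else ⊤

/-- The constraint set `B_k`. -/
def Bk (m k : ℕ) : Set (Fin m → ℝ) :=
  {u | (∀ j, 0 ≤ u j ∧ u j ≤ 1) ∧ (∑ j, u j) ≤ (k : ℝ)}

/-!
Write `a_j = λ d_j + u*_j`, let `w` scale group `j` of `t` by `u*_j / a_j`, so that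
`y = (t - w) / λ` scales it by `d_j / a_j`, and put `R = Σ_j d_j ‖t_{s_j}‖² u*_j / a_j²`.
The affine function `θ ↦ ⟨θ, y⟩ - R/2` lies below `GS_k**` and touches it at `w`; hence the prox
objective at any `θ` exceeds its value at `w` by at least `½‖θ - w‖²`, and `v = w`.

Both facts come from `GS_k*(y') = ½ max_{u ∈ B_k} Σ_j u_j ‖y'_{s_j}‖² / d_j`, where the linear
program over `B_k` is solved by the indicator of at most `k` groups (a top-`k` set). The bound
`GS_k*(y) ≤ R/2` is the first-order optimality condition of `u*` for the convex objective
`u ↦ Σ_j d_j ‖t_{s_j}‖² / (λ d_j + u_j)`, and `GS_k**(w) ≤ R/2` follows from the lower bound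
with `u = u*` and Young's inequality in each group.
-/

lemma exists_threshold_finset {ι : Type*} [Fintype ι] {q : ι → ℝ} (hq : ∀ j, 0 ≤ q j) (k : ℕ) :
    ∃ J : Finset ι, ∃ τ : ℝ, #J ≤ k ∧ 0 ≤ τ ∧ (∀ j ∈ J, τ ≤ q j) ∧ (∀ j ∉ J, q j ≤ τ) ∧
      (τ = 0 ∨ #J = k) := by
  obtain ⟨J, hJ, hJmax⟩ := exists_max_image {J : Finset ι | #J ≤ k} (fun J => ∑ j ∈ J, q j)
    ⟨∅, by simp⟩
  replace hJ : #J ≤ k := (mem_filter.mp hJ).2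
  replace hJmax : ∀ J' : Finset ι, #J' ≤ k → ∑ j ∈ J', q j ≤ ∑ j ∈ J, q j :=
    fun J' h => hJmax J' (by simpa using h)
  by_cases hout : ∀ j ∉ J, q j ≤ 0
  · exact ⟨J, 0, hJ, le_rfl, fun j _ => hq j, hout, .inl rfl⟩
  push Not at hout
  obtain ⟨j₀, hj₀, hq₀⟩ := hout
  obtain ⟨j₁, hj₁, hj₁max⟩ := exists_max_image (univ \ J) q ⟨j₀, by simpa using hj₀⟩
  replace hj₁ : j₁ ∉ J := (mem_sdiff.mp hj₁).2
  have hcard : #J = k := by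
    by_contra hne
    have := hJmax (insert j₀ J) (by rw [card_insert_of_notMem hj₀]; omega)
    rw [sum_insert hj₀] at this
    linarith
  refine ⟨J, q j₁, hJ, hq j₁, fun i hi => ?_, fun j hj => hj₁max j (by simpa using hj),
    .inr hcard⟩
  -- exchanging `i ∈ J` for `j₁` does not increase the sum, so `q j₁ ≤ q i`
  have hi' : j₁ ∉ J.erase i := fun h => hj₁ (mem_of_mem_erase h)
  have := hJmax (insert j₁ (J.erase i))
    (by have := card_pos.mpr ⟨i, hi⟩; rw [card_insert_of_notMem hi', card_erase_of_mem hi]; omega)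
  rw [sum_insert hi', ← add_sum_erase J q hi] at this
  linarith

lemma sum_mul_le_sum_of_threshold {ι : Type*} [Fintype ι] {q u : ι → ℝ} {J : Finset ι} {τ : ℝ}
    {k : ℕ} (hu : ∀ j, 0 ≤ u j ∧ u j ≤ 1) (hsum : ∑ j, u j ≤ k) (hτ : 0 ≤ τ)
    (hJ : ∀ j ∈ J, τ ≤ q j) (hJc : ∀ j ∉ J, q j ≤ τ) (hτJ : τ = 0 ∨ #J = k) :
    ∑ j, u j * q j ≤ ∑ j ∈ J, q j :=
  calc ∑ j, u j * q j = ∑ j, u j * (q j - τ) + τ * ∑ j, u j := by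
        rw [mul_sum, ← sum_add_distrib]; congr! 1; ring
    _ ≤ ∑ j ∈ J, u j * (q j - τ) + τ * k := by
        gcongr ?_ + ?_
        · refine sum_le_sum_of_subset_of_nonpos' (subset_univ J) fun j _ hj => ?_
          exact mul_nonpos_of_nonneg_of_nonpos (hu j).1 (by linarith [hJc j hj])
        · exact mul_le_mul_of_nonneg_left hsum hτ
    _ ≤ ∑ j ∈ J, (q j - τ) + τ * k := by
        gcongr with j hj
        exact mul_le_of_le_one_left (by linarith [hJ j hj]) (hu j).2
    _ = ∑ j ∈ J, q j := by
        rw [sum_sub_distrib, sum_const, nsmul_eq_mul]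
        rcases hτJ with rfl | h
        · simp
        · rw [h]; ring

lemma exists_card_le_sum_mul_le {ι : Type*} [Fintype ι] {q u : ι → ℝ} {k : ℕ}
    (hq : ∀ j, 0 ≤ q j) (hu : ∀ j, 0 ≤ u j ∧ u j ≤ 1) (hsum : ∑ j, u j ≤ k) :
    ∃ J : Finset ι, #J ≤ k ∧ ∑ j, u j * q j ≤ ∑ j ∈ J, q j := by
  obtain ⟨J, τ, hJk, hτ, hJ, hJc, hτJ⟩ := exists_threshold_finset hq k
  exact ⟨J, hJk, sum_mul_le_sum_of_threshold hu hsum hτ hJ hJc hτJ⟩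

lemma convex_Bk (m k : ℕ) : Convex ℝ (Bk m k) := by
  intro x hx y hy a b ha hb hab
  refine ⟨fun j => ⟨?_, ?_⟩, ?_⟩
  · have := (hx.1 j).1; have := (hy.1 j).1
    simp only [Pi.add_apply, Pi.smul_apply, smul_eq_mul]; positivity
  · have := (hx.1 j).2; have := (hy.1 j).2
    simp only [Pi.add_apply, Pi.smul_apply, smul_eq_mul]; nlinarith
  · simp only [Pi.add_apply, Pi.smul_apply, smul_eq_mul, sum_add_distrib, ← mul_sum]
    nlinarith [hx.2, hy.2]

theorem IsMinOn.sum_div_add_sq_mul_le {ι : Type*} [Fintype ι] {A b u₀ u : ι → ℝ}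
    {S : Set (ι → ℝ)} (hmin : IsMinOn (fun u => ∑ j, A j / (b j + u j)) S u₀)
    (hS : Convex ℝ S) (hu₀ : u₀ ∈ S) (hu : u ∈ S) (hb : ∀ j, b j + u₀ j ≠ 0) :
    ∑ j, A j / (b j + u₀ j) ^ 2 * u j ≤ ∑ j, A j / (b j + u₀ j) ^ 2 * u₀ j := by
  have hderiv : HasFDerivAt (fun u => ∑ j, A j / (b j + u j))
      (∑ j, (-(A j / (b j + u₀ j) ^ 2)) • (ContinuousLinearMap.proj j : (ι → ℝ) →L[ℝ] ℝ)) u₀ := by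
    refine HasFDerivAt.fun_sum fun j _ => ?_
    have h1 : HasDerivAt (fun x => A j / (b j + x)) (-(A j / (b j + u₀ j) ^ 2)) (u₀ j) := by
      simpa [div_eq_mul_inv] using
        (((hasDerivAt_id (u₀ j)).const_add (b j)).inv (hb j)).const_mul (A j)
    exact HasDerivAt.comp_hasFDerivAt (h₂ := fun x => A j / (b j + x)) (f := fun u : ι → ℝ => u j)
      u₀ h1 (hasFDerivAt_apply j u₀)
  have := hmin.localize.hasFDerivWithinAt_nonneg hderiv.hasFDerivWithinAt
    (sub_mem_posTangentConeAt_of_segment_subset (hS.segment_subset hu₀ hu))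
  simp only [FunLike.coe_sum, Finset.sum_apply, FunLike.coe_smul, Pi.smul_apply,
    ContinuousLinearMap.proj_apply, Pi.sub_apply, smul_eq_mul, neg_mul, sum_neg_distrib, mul_sub,
    sum_sub_distrib] at this
  linarith

lemma sum_mul_le_sum_sq_div_add {ι : Type*} (s : Finset ι) (x z : ι → ℝ) {D : ℝ} (hD : 0 < D) :
    ∑ i ∈ s, x i * z i ≤ (∑ i ∈ s, x i ^ 2) / (2 * D) + D / 2 * ∑ i ∈ s, z i ^ 2 := by
  rw [sum_div, mul_sum, ← sum_add_distrib]
  refine sum_le_sum fun i _ => ?_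
  rw [div_add' _ _ _ (by positivity), le_div_iff₀ (by positivity)]
  nlinarith [sq_nonneg (x i - D * z i)]

lemma EReal.coe_finset_sum {ι : Type*} (s : Finset ι) (f : ι → ℝ) :
    ((∑ i ∈ s, f i : ℝ) : EReal) = ∑ i ∈ s, (f i : EReal) :=
  map_sum (⟨⟨Real.toEReal, EReal.coe_zero⟩, EReal.coe_add⟩ : ℝ →+ EReal) f s

section GroupSparse

open Function

variable {n m : ℕ} {s : Fin m → Finset (Fin n)}

lemma sum_eq_sum_sum_of_partition (hs : Pairwise (Disjoint on s)) (hcover : ∀ i, ∃ j, i ∈ s j)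
    (f : Fin n → ℝ) : ∑ i, f i = ∑ j, ∑ i ∈ s j, f i := by
  rw [← sum_biUnion fun j _ j' _ h => hs h]
  congr
  ext i
  simpa using hcover i

lemma groupProj_eq_zero_iff {s : Finset (Fin n)} {x : Fin n → ℝ} :
    groupProj s x = 0 ↔ ∀ i ∈ s, x i = 0 := by
  simp [funext_iff, groupProj]

lemma phi_sqrt_smul_groupProj {c τ : ℝ} (hc : 0 ≤ c) (hτ : 0 < τ) (s : Finset (Fin n))
    (x : Fin n → ℝ) :
    phi (√c • groupProj s x) τ = ((c * (∑ i ∈ s, x i ^ 2) / τ : ℝ) : EReal) := by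
  simp [phi, hτ, groupProj, mul_pow, Real.sq_sqrt hc, ite_pow, ← mul_sum, sum_ite_mem]

def groupScale (s : Fin m → Finset (Fin n)) (c : Fin m → ℝ) (x : Fin n → ℝ) : Fin n → ℝ :=
  ∑ j, c j • groupProj (s j) x

lemma groupScale_apply_of_mem (hs : Pairwise (Disjoint on s)) {c : Fin m → ℝ} {x : Fin n → ℝ}
    {i : Fin n} {j : Fin m} (hi : i ∈ s j) : groupScale s c x i = c j * x i := by
  rw [groupScale, Finset.sum_apply, sum_eq_single j]
  · simp [groupProj, hi]
  · intro j' _ hj'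
    simp [groupProj, disjoint_left.mp (hs hj').symm hi]
  · simp

lemma groupProj_groupScale (hs : Pairwise (Disjoint on s)) (c : Fin m → ℝ) (x : Fin n → ℝ)
    (j : Fin m) : groupProj (s j) (groupScale s c x) = c j • groupProj (s j) x := by
  ext i
  by_cases hi : i ∈ s j
  · simp [groupProj, hi, groupScale_apply_of_mem hs hi]
  · simp [groupProj, hi]

lemma sum_groupScale_mul (c : Fin m → ℝ) (x z : Fin n → ℝ) :
    ∑ i, groupScale s c x i * z i = ∑ j, c j * ∑ i ∈ s j, x i * z i := by
  simp only [groupScale, Finset.sum_apply, Pi.smul_apply, smul_eq_mul, groupProj, mul_ite,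
    mul_zero, sum_mul, ite_mul, zero_mul, mul_sum]
  rw [sum_comm]
  simp [sum_ite_mem, mul_assoc]

lemma sum_sq_groupScale (hs : Pairwise (Disjoint on s)) (c : Fin m → ℝ) (x : Fin n → ℝ)
    (j : Fin m) : ∑ i ∈ s j, groupScale s c x i ^ 2 = c j ^ 2 * ∑ i ∈ s j, x i ^ 2 := by
  rw [mul_sum]
  exact sum_congr rfl fun i hi => by rw [groupScale_apply_of_mem hs hi]; ring

lemma sum_groupScale_mul_groupScale (hs : Pairwise (Disjoint on s)) (c c' : Fin m → ℝ)
    (x : Fin n → ℝ) :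
    ∑ i, groupScale s c x i * groupScale s c' x i = ∑ j, c j * c' j * ∑ i ∈ s j, x i ^ 2 := by
  rw [sum_groupScale_mul]
  refine sum_congr rfl fun j _ => ?_
  rw [mul_assoc, mul_sum, mul_sum, mul_sum]
  exact sum_congr rfl fun i hi => by rw [groupScale_apply_of_mem hs hi]; ring

lemma nnzGroups_groupScale_le (hs : Pairwise (Disjoint on s)) (c : Fin m → ℝ) (x : Fin n → ℝ) :
    nnzGroups s (groupScale s c x) ≤ #{j | c j ≠ 0} := by
  refine card_le_card fun j => ?_
  simp only [mem_filter, mem_univ, true_and, groupProj_groupScale hs]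
  contrapose!
  intro h
  simp [h]

lemma le_fconj (f : (Fin n → ℝ) → EReal) (y θ : Fin n → ℝ) :
    ((∑ i, y i * θ i : ℝ) : EReal) - f θ ≤ fconj f y :=
  le_iSup (fun θ => ((∑ i, y i * θ i : ℝ) : EReal) - f θ) θ

lemma fconj_le {f : (Fin n → ℝ) → EReal} {y : Fin n → ℝ} {B : EReal}
    (h : ∀ θ, ((∑ i, y i * θ i : ℝ) : EReal) - f θ ≤ B) : fconj f y ≤ B :=
  iSup_le h

variable {d : Fin m → ℝ} {k : ℕ}

lemma le_fconj_gsk (hs : Pairwise (Disjoint on s)) (hd : ∀ j, 0 < d j) {u : Fin m → ℝ}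
    (hu : u ∈ Bk m k) (y : Fin n → ℝ) :
    ((1 / 2 * ∑ j, u j * ((∑ i ∈ s j, y i ^ 2) / d j) : ℝ) : EReal) ≤ fconj (gsk s d k) y := by
  obtain ⟨J, hJk, hJ⟩ := exists_card_le_sum_mul_le
    (fun j => div_nonneg (sum_nonneg fun i _ => sq_nonneg (y i)) (hd j).le) hu.1 hu.2
  set c : Fin m → ℝ := fun j => if j ∈ J then (d j)⁻¹ else 0
  have hnnz : nnzGroups s (groupScale s c y) ≤ k := by
    refine (nnzGroups_groupScale_le hs c y).trans ((card_le_card fun j => ?_).trans hJk)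
    intro hj
    by_contra hjJ
    simp [c, hjJ] at hj
  have hinner : ∑ i, y i * groupScale s c y i = ∑ j ∈ J, (∑ i ∈ s j, y i ^ 2) / d j := by
    simp_rw [mul_comm (y _), sum_groupScale_mul, c, ite_mul, zero_mul, sum_ite_mem, univ_inter]
    exact sum_congr rfl fun j _ => by rw [inv_mul_eq_div]; simp [sq]
  have hquad : ∑ j, d j * ∑ i ∈ s j, groupScale s c y i ^ 2 =
      ∑ j ∈ J, (∑ i ∈ s j, y i ^ 2) / d j := by
    have hterm : ∀ j, d j * (c j ^ 2 * ∑ i ∈ s j, y i ^ 2) =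
        if j ∈ J then (∑ i ∈ s j, y i ^ 2) / d j else 0 := by
      intro j
      by_cases hj : j ∈ J
      · simp only [c, hj, if_true]
        field_simp [(hd j).ne']
      · simp [c, hj]
    simp_rw [sum_sq_groupScale hs, hterm, sum_ite_mem, univ_inter]
  refine le_trans ?_ (le_fconj _ y (groupScale s c y))
  rw [gsk, if_pos hnnz, hinner, hquad, ← EReal.coe_sub, EReal.coe_le_coe_iff]
  exact (mul_le_mul_of_nonneg_left hJ (by norm_num)).trans_eq (by ring)

lemma fconj_gsk_le (hs : Pairwise (Disjoint on s)) (hcover : ∀ i, ∃ j, i ∈ s j)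
    (hd : ∀ j, 0 < d j) {y : Fin n → ℝ} {M : ℝ}
    (hM : ∀ u ∈ Bk m k, ∑ j, u j * ((∑ i ∈ s j, y i ^ 2) / d j) ≤ M) :
    fconj (gsk s d k) y ≤ ((M / 2 : ℝ) : EReal) := by
  refine fconj_le fun θ => ?_
  by_cases hθ : nnzGroups s θ ≤ k
  swap
  · simp [gsk, hθ]
  set u : Fin m → ℝ := fun j => if groupProj (s j) θ = 0 then 0 else 1
  have hu : u ∈ Bk m k := by
    refine ⟨fun j => ?_, ?_⟩
    · by_cases h : groupProj (s j) θ = 0 <;> simp [u, h]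
    · simpa [u, sum_ite, nnzGroups] using hθ
  have hgroup : ∀ j, ∑ i ∈ s j, y i * θ i - 1 / 2 * (d j * ∑ i ∈ s j, θ i ^ 2) ≤
      1 / 2 * (u j * ((∑ i ∈ s j, y i ^ 2) / d j)) := by
    intro j
    by_cases h : groupProj (s j) θ = 0
    · have hθ0 := groupProj_eq_zero_iff.mp h
      rw [sum_eq_zero fun i hi => by simp [hθ0 i hi], sum_eq_zero fun i hi => by simp [hθ0 i hi]]
      simp [u, h]
    · have := sum_mul_le_sum_sq_div_add (s j) y θ (hd j)
      simp only [u, h, if_false]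
      rw [sub_le_iff_le_add]
      exact this.trans_eq (by ring)
  rw [gsk, if_pos hθ, ← EReal.coe_sub, EReal.coe_le_coe_iff, sum_eq_sum_sum_of_partition hs hcover]
  have := sum_le_sum fun j (_ : j ∈ univ) => hgroup j
  rw [sum_sub_distrib, ← mul_sum, ← mul_sum] at this
  linarith [hM u hu]

lemma fconj_fconj_gsk_groupScale_le (hs : Pairwise (Disjoint on s)) (hd : ∀ j, 0 < d j)
    {u a : Fin m → ℝ} (hu : u ∈ Bk m k) (ha : ∀ j, 0 < a j) (t : Fin n → ℝ) :
    fconj (fconj (gsk s d k)) (groupScale s (fun j => u j / a j) t) ≤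
      ((1 / 2 * ∑ j, d j * (∑ i ∈ s j, t i ^ 2) / a j ^ 2 * u j : ℝ) : EReal) := by
  refine fconj_le fun y => (EReal.sub_le_sub le_rfl (le_fconj_gsk hs hd hu y)).trans ?_
  rw [← EReal.coe_sub, EReal.coe_le_coe_iff, sum_groupScale_mul, mul_sum, mul_sum,
    ← sum_sub_distrib]
  refine sum_le_sum fun j _ => ?_
  have hyoung := mul_le_mul_of_nonneg_left (sum_mul_le_sum_sq_div_add (s j) t y
    (div_pos (ha j) (hd j))) (div_nonneg (hu.1 j).1 (ha j).le)
  have hsplit : u j / a j * ((∑ i ∈ s j, t i ^ 2) / (2 * (a j / d j)) +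
      a j / d j / 2 * ∑ i ∈ s j, y i ^ 2) = 1 / 2 * (d j * (∑ i ∈ s j, t i ^ 2) / a j ^ 2 * u j) +
      1 / 2 * (u j * ((∑ i ∈ s j, y i ^ 2) / d j)) := by
    field_simp [(ha j).ne', (hd j).ne']
  linarith

lemma fconj_gsk_groupScale_le (hs : Pairwise (Disjoint on s)) (hcover : ∀ i, ∃ j, i ∈ s j)
    (hd : ∀ j, 0 < d j) {a : Fin m → ℝ} (ha : ∀ j, a j ≠ 0) (t : Fin n → ℝ) {M : ℝ}
    (hM : ∀ u ∈ Bk m k, ∑ j, d j * (∑ i ∈ s j, t i ^ 2) / a j ^ 2 * u j ≤ M) :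
    fconj (gsk s d k) (groupScale s (fun j => d j / a j) t) ≤ ((M / 2 : ℝ) : EReal) := by
  refine fconj_gsk_le hs hcover hd fun u hu => (le_of_eq ?_).trans (hM u hu)
  refine sum_congr rfl fun j _ => ?_
  rw [sum_sq_groupScale hs]
  field_simp [ha j, (hd j).ne']

lemma isMinOn_sum_div_of_phi (hd : ∀ j, 0 < d j) {lam : ℝ} (hlam : 0 < lam) (t : Fin n → ℝ)
    {ustar : Fin m → ℝ} (hmem : ustar ∈ Bk m k)
    (hust : ∀ u ∈ Bk m k,
      (∑ j, phi (Real.sqrt (d j) • groupProj (s j) t) (lam * d j + ustar j))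
        ≤ ∑ j, phi (Real.sqrt (d j) • groupProj (s j) t) (lam * d j + u j)) :
    IsMinOn (fun u => ∑ j, d j * (∑ i ∈ s j, t i ^ 2) / (lam * d j + u j)) (Bk m k) ustar := by
  have hphi : ∀ u ∈ Bk m k, ∑ j, phi (√(d j) • groupProj (s j) t) (lam * d j + u j) =
      ((∑ j, d j * (∑ i ∈ s j, t i ^ 2) / (lam * d j + u j) : ℝ) : EReal) := by
    intro u hu
    rw [EReal.coe_finset_sum]
    exact sum_congr rfl fun j _ => phi_sqrt_smul_groupProj (hd j).le
      (add_pos_of_pos_of_nonneg (mul_pos hlam (hd j)) (hu.1 j).1) _ _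
  refine isMinOn_iff.mpr fun u hu => ?_
  have := hust u hu
  rwa [hphi ustar hmem, hphi u hu, EReal.coe_le_coe_iff] at this

end GroupSparse

theorem eq_of_prox_of_affine_minorant {ι : Type*} [Fintype ι] {g : (ι → ℝ) → EReal}
    {lam R : ℝ} {t v w y : ι → ℝ} (hlam : 0 < lam) (hy : ∀ i, lam * y i = t i - w i)
    (hminor : ∀ θ, ((∑ i, θ i * y i - R : ℝ) : EReal) ≤ g θ)
    (hw : g w ≤ ((∑ i, w i * y i - R : ℝ) : EReal))
    (hv : ∀ θ : ι → ℝ,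
      ((lam : ℝ) : EReal) * g v + (((1 : ℝ) / 2 * ∑ i, (v i - t i) ^ 2 : ℝ) : EReal)
        ≤ ((lam : ℝ) : EReal) * g θ + (((1 : ℝ) / 2 * ∑ i, (θ i - t i) ^ 2 : ℝ) : EReal)) :
    v = w := by
  have hle : lam * (∑ i, v i * y i - R) + 1 / 2 * ∑ i, (v i - t i) ^ 2 ≤
      lam * (∑ i, w i * y i - R) + 1 / 2 * ∑ i, (w i - t i) ^ 2 := by
    rw [← EReal.coe_le_coe_iff, EReal.coe_add, EReal.coe_add,
      EReal.coe_mul lam, EReal.coe_mul lam]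
    have hlam' : (0 : EReal) ≤ lam := EReal.coe_nonneg.mpr hlam.le
    calc _ ≤ (lam : EReal) * g v + _ := by gcongr; exact hminor v
      _ ≤ _ := hv w
      _ ≤ _ := by gcongr
  have hsq : ∑ i, (v i - w i) ^ 2 ≤ 0 := by
    have hid : ∀ i, (v i - w i) ^ 2 = 2 * (lam * (v i * y i) + 1 / 2 * (v i - t i) ^ 2 -
        (lam * (w i * y i) + 1 / 2 * (w i - t i) ^ 2)) := fun i => by
      rw [← mul_assoc, ← mul_assoc, mul_comm lam, mul_comm lam, mul_assoc, mul_assoc, hy]; ring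
    simp only [hid, ← mul_sum, sum_sub_distrib, sum_add_distrib]
    nlinarith
  funext i
  have := (sum_eq_zero_iff_of_nonneg fun i _ => sq_nonneg (v i - w i)).mp
    (le_antisymm hsq (sum_nonneg fun i _ => sq_nonneg _)) i (mem_univ i)
  linarith [pow_eq_zero_iff (n := 2) (by norm_num) |>.mp this]

theorem prox_formula_general {n m : ℕ} (k : ℕ)
    (s : Fin m → Finset (Fin n))
    (hdisj : ∀ j j', j ≠ j' → Disjoint (s j) (s j'))
    (hcover : ∀ i, ∃ j, i ∈ s j)
    (d : Fin m → ℝ) (hd : ∀ j, 0 < d j)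
    (lam : ℝ) (hlam : 0 < lam) (t : Fin n → ℝ)
    (ustar : Fin m → ℝ) (hmem : ustar ∈ Bk m k)
    (hust : ∀ u ∈ Bk m k,
      (∑ j, phi (Real.sqrt (d j) • groupProj (s j) t) (lam * d j + ustar j))
        ≤ ∑ j, phi (Real.sqrt (d j) • groupProj (s j) t) (lam * d j + u j))
    (v : Fin n → ℝ)
    (hv : ∀ θ : Fin n → ℝ,
      ((lam : ℝ) : EReal) * fconj (fconj (gsk s d k)) v
          + ((((1 : ℝ) / 2) * ∑ i, (v i - t i) ^ 2 : ℝ) : EReal)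
        ≤ ((lam : ℝ) : EReal) * fconj (fconj (gsk s d k)) θ
          + ((((1 : ℝ) / 2) * ∑ i, (θ i - t i) ^ 2 : ℝ) : EReal)) :
    ∀ j, groupProj (s j) v = (ustar j / (lam * d j + ustar j)) • groupProj (s j) t := by
  set a : Fin m → ℝ := fun j => lam * d j + ustar j
  have ha : ∀ j, 0 < a j := fun j => add_pos_of_pos_of_nonneg (mul_pos hlam (hd j)) (hmem.1 j).1
  set R := ∑ j, d j * (∑ i ∈ s j, t i ^ 2) / a j ^ 2 * ustar j
  set w := groupScale s (fun j => ustar j / a j) t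
  set y := groupScale s (fun j => d j / a j) t
  have hVI : ∀ u ∈ Bk m k, ∑ j, d j * (∑ i ∈ s j, t i ^ 2) / a j ^ 2 * u j ≤ R := fun u hu =>
    (isMinOn_sum_div_of_phi hd hlam t hmem hust).sum_div_add_sq_mul_le (convex_Bk m k) hmem hu
      fun j => (ha j).ne'
  have hy : ∀ i, lam * y i = t i - w i := by
    intro i
    obtain ⟨j, hi⟩ := hcover i
    simp only [y, w, groupScale_apply_of_mem hdisj hi]
    field_simp [(ha j).ne']
    simp only [a]
    ring
  have hwy : ∑ i, w i * y i = R := by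
    rw [sum_groupScale_mul_groupScale hdisj]
    exact sum_congr rfl fun j _ => by field_simp [(ha j).ne']
  have hconj : fconj (gsk s d k) y ≤ ((R / 2 : ℝ) : EReal) :=
    fconj_gsk_groupScale_le hdisj hcover hd (fun j => (ha j).ne') t hVI
  have hvw : v = w := by
    refine eq_of_prox_of_affine_minorant hlam hy (R := R / 2) (fun θ => ?_) ?_ hv
    · exact (EReal.coe_sub _ _ ▸ EReal.sub_le_sub le_rfl hconj).trans (le_fconj _ θ y)
    · rw [hwy]
      convert fconj_fconj_gsk_groupScale_le hdisj hd hmem ha t using 2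
      ring
  intro j
  rw [hvw, groupProj_groupScale hdisj]

/-- if `u*` minimizes `u ↦ Σ_j φ(√d_j·t_{s_j}, λd_j + u_j)` over
`B_k` and `v` is the proximal point `prox_{λ·GS_k}(t)` (i.e. the global
minimizer of `θ ↦ λ·GS_k(θ) + ½‖θ-t‖²`), then groupwise
`v_{s_j} = (u*_j/(λd_j + u*_j))·t_{s_j}`. -/
theorem prox_formula {n m : ℕ} (k : ℕ) (hk1 : 1 ≤ k) (hkm : k ≤ m)
    (s : Fin m → Finset (Fin n))
    (hdisj : ∀ j j', j ≠ j' → Disjoint (s j) (s j'))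
    (hcover : ∀ i, ∃ j, i ∈ s j)
    (d : Fin m → ℝ) (hd : ∀ j, 0 < d j)
    (lam : ℝ) (hlam : 0 < lam) (t : Fin n → ℝ)
    (ustar : Fin m → ℝ) (hmem : ustar ∈ Bk m k)
    (hust : ∀ u ∈ Bk m k,
      (∑ j, phi (Real.sqrt (d j) • groupProj (s j) t) (lam * d j + ustar j))
        ≤ ∑ j, phi (Real.sqrt (d j) • groupProj (s j) t) (lam * d j + u j))
    (v : Fin n → ℝ)
    (hv : ∀ θ : Fin n → ℝ,
      ((lam : ℝ) : EReal) * fconj (fconj (gsk s d k)) v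
          + ((((1 : ℝ) / 2) * ∑ i, (v i - t i) ^ 2 : ℝ) : EReal)
        ≤ ((lam : ℝ) : EReal) * fconj (fconj (gsk s d k)) θ
          + ((((1 : ℝ) / 2) * ∑ i, (θ i - t i) ^ 2 : ℝ) : EReal)) :
    ∀ j, groupProj (s j) v = (ustar j / (lam * d j + ustar j)) • groupProj (s j) t :=
  prox_formula_general k s hdisj hcover d hd lam hlam t ustar hmem hust v hv
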